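/- If a finite simple graph G is strongly k-choosable, then G is strongly km-choosable for every positive integer m. -/

import Mathlib

/-- A graph `G` is `(a:b)`-choosable if for every assignment of color sets of size `a`
to the vertices, one can choose subsets of size `b` that are disjoint on adjacent vertices. -/
def SimpleGraph.Choosable {V : Type*} (G : SimpleGraph V) (a b : ℕ) : Prop :=
  ∀ S : V → Finset ℕ, (∀ v, (S v).card = a) →
    ∃ C : V → Finset ℕ, (∀ v, C v ⊆ S v) ∧ (∀ v, (C v).card = b) ∧
      ∀ u v, G.Adj u v → Disjoint (C u) (C v)

/-- The `k`-th choice number of `G`: the least `n` such that `G` is `(n:k)`-choosable. -/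
noncomputable def SimpleGraph.chooseNum {V : Type*} (G : SimpleGraph V) (k : ℕ) : ℕ :=
  sInf {n | G.Choosable n k}

/-- The graph obtained from `G` by adding all edges inside each member of a family `P`
of subsets of the vertices. -/
def SimpleGraph.addCliques {V : Type*} (G : SimpleGraph V) (P : Set (Set V)) :
    SimpleGraph V :=
  G ⊔ SimpleGraph.fromRel (fun u v => ∃ A ∈ P, u ∈ A ∧ v ∈ A)

/-- `G` is strongly `k`-colorable if every graph obtained from `G` by adding a union of
vertex-disjoint cliques of size at most `k` is `k`-colorable. -/
def SimpleGraph.StronglyColorable {V : Type*} (G : SimpleGraph V) (k : ℕ) : Prop :=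
  ∀ P : Set (Set V), P.PairwiseDisjoint id → (∀ A ∈ P, A.ncard ≤ k) →
    (G.addCliques P).Colorable k

/-- `G` is strongly `k`-choosable if every graph obtained from `G` by adding a union of
vertex-disjoint cliques of size at most `k` is `k`-choosable. -/
def SimpleGraph.StronglyChoosable {V : Type*} (G : SimpleGraph V) (k : ℕ) : Prop :=
  ∀ P : Set (Set V), P.PairwiseDisjoint id → (∀ A ∈ P, A.ncard ≤ k) →
    (G.addCliques P).Choosable k 1

/-!
Given disjoint cliques of size at most `k * m` and lists of size `k * m`, split every clique
into blocks of size at most `k` and shrink every list to `k` colours so that the lists of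
different blocks of one clique are disjoint; strong `k`-choosability applied to the blocks and
the shrunk lists then yields the colouring. A block is split off a clique with a minimal colour
set `W` of which at least `min k #A` members of the clique `A` see `k` colours: they take their
colours from `W`, and minimality makes every other list lose at most `k` colours when `W` is
removed, so induction on `m` applies to the rest of the clique.
-/

section

open Finset

variable {V α : Type*}

namespace Finset

section

variable [DecidableEq V] [DecidableEq α]

theorem exists_block_and_colorSet (k : ℕ) (A : Finset V) (S : V → Finset α)
    (hS : ∀ v ∈ A, k ≤ #(S v)) :
    ∃ B ⊆ A, #B = min k #A ∧ ∃ W : Finset α,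
      (∀ v ∈ B, k ≤ #(S v ∩ W)) ∧ ∀ u ∈ A \ B, #(S u ∩ W) ≤ k := by
  set n := min k #A
  let rich (W : Finset α) : Finset V := {v ∈ A | k ≤ #(S v ∩ W)}
  have hrich_all : rich (A.sup S) = A := by
    refine filter_true_of_mem fun v hv => ?_
    rw [inter_eq_left.mpr (le_sup hv)]
    exact hS v hv
  obtain ⟨W, hWn, hWmin⟩ := exists_minimal_of_wellFoundedLT (fun W => n ≤ #(rich W))
    ⟨A.sup S, by rw [hrich_all]; exact min_le_right _ _⟩
  set D : Finset V := {v ∈ A | k < #(S v ∩ W)}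
  -- the lists meeting `W` in more than `k` colours still meet `W.erase c` in `k` colours
  have hD : #D ≤ n := by
    obtain rfl | ⟨c, hc⟩ := W.eq_empty_or_nonempty
    · simp [D]
    have hDc : D ⊆ rich (W.erase c) := fun v hv => by
      simp only [D, rich, mem_filter, inter_erase] at hv ⊢
      exact ⟨hv.1, by have := pred_card_le_card_erase (s := S v ∩ W) (a := c); omega⟩
    have hsmall : ¬ n ≤ #(rich (W.erase c)) := fun h =>
      (notMem_erase c W) (hWmin h (erase_subset c W) hc)
    have := card_le_card hDc
    omega
  have hDW : D ⊆ rich W := monotone_filter_right _ fun v _ h => h.le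
  obtain ⟨B, hDB, hBW, hB⟩ := exists_subsuperset_card_eq hDW hD hWn
  refine ⟨B, hBW.trans (filter_subset _ _), hB, W, fun v hv => (mem_filter.mp (hBW hv)).2,
    fun u hu => ?_⟩
  rw [mem_sdiff] at hu
  exact not_lt.mp fun h => hu.2 (hDB (mem_filter.mpr ⟨hu.1, h⟩))

theorem exists_labelling_with_disjoint_sublists (k m : ℕ) (A : Finset V) (S : V → Finset α)
    (hA : #A ≤ k * m) (hS : ∀ v ∈ A, k * m ≤ #(S v)) :
    ∃ (g : V → ℕ) (T : V → Finset α), (∀ v ∈ A, T v ⊆ S v ∧ #(T v) = k) ∧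
      (∀ u ∈ A, ∀ v ∈ A, g u ≠ g v → Disjoint (T u) (T v)) ∧ ∀ j, #{v ∈ A | g v = j} ≤ k := by
  induction m generalizing A S with
  | zero =>
    obtain rfl : A = ∅ := card_eq_zero.mp (Nat.le_zero.mp hA)
    exact ⟨0, fun _ => ∅, by simp, by simp, by simp⟩
  | succ m ih =>
    rw [Nat.mul_succ] at hA hS
    obtain ⟨B, hBA, hB, W, hBW, hAW⟩ :=
      A.exists_block_and_colorSet k S fun v hv => by have := hS v hv; omega
    choose! R hRW hR using fun v hv => exists_subset_card_eq (hBW v hv)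
    obtain ⟨g, T, hT, hgT, hg⟩ := ih (A \ B) (fun v => S v \ W)
      (by rw [card_sdiff_of_subset hBA]; omega)
      (fun v hv => by
        have := card_sdiff_add_card_inter (S v) W
        have := hS v (mem_sdiff.mp hv).1
        have := hAW v hv
        omega)
    have hRT : ∀ u ∈ B, ∀ v ∈ A \ B, Disjoint (R u) (T v) := fun u hu v hv =>
      disjoint_of_subset_left ((hRW u hu).trans inter_subset_right)
        (disjoint_of_subset_right (hT v hv).1 disjoint_sdiff)
    refine ⟨fun v => if v ∈ B then 0 else g v + 1, fun v => if v ∈ B then R v else T v,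
      fun v hv => ?_, fun u hu v hv huv => ?_, fun j => ?_⟩
    · by_cases hvB : v ∈ B
      · simpa [hvB] using ⟨(hRW v hvB).trans inter_subset_left, hR v hvB⟩
      · have := hT v (mem_sdiff.mpr ⟨hv, hvB⟩)
        simpa [hvB] using ⟨this.1.trans sdiff_subset, this.2⟩
    · by_cases huB : u ∈ B <;> by_cases hvB : v ∈ B <;>
        simp only [huB, hvB, if_true, if_false] at huv ⊢
      · exact absurd rfl huv
      · exact hRT u huB v (mem_sdiff.mpr ⟨hv, hvB⟩)
      · exact (hRT v hvB u (mem_sdiff.mpr ⟨hu, huB⟩)).symm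
      · exact hgT u (mem_sdiff.mpr ⟨hu, huB⟩) v (mem_sdiff.mpr ⟨hv, hvB⟩) (by omega)
    · rcases j with _ | j
      · refine (card_le_card fun v hv => ?_).trans (hB.trans_le (min_le_left _ _))
        by_contra hvB
        simp [hvB] at hv
      · refine (card_le_card fun v hv => ?_).trans (hg j)
        by_cases hvB : v ∈ B <;> simp_all

end

end Finset

theorem exists_refinement_with_disjoint_sublists [Finite V] {P : Set (Set V)}
    (hP : P.PairwiseDisjoint id) {k m : ℕ} (hm : 0 < m) (hPcard : ∀ A ∈ P, A.ncard ≤ k * m)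
    (S : V → Finset α) (hS : ∀ v, k * m ≤ #(S v)) :
    ∃ (Q : Set (Set V)) (T : V → Finset α), Q.PairwiseDisjoint id ∧ (∀ B ∈ Q, B.ncard ≤ k) ∧
      (∀ v, T v ⊆ S v ∧ #(T v) = k) ∧
      ∀ A ∈ P, ∀ u ∈ A, ∀ v ∈ A, (∃ B ∈ Q, u ∈ B ∧ v ∈ B) ∨ Disjoint (T u) (T v) := by
  classical
  have := Fintype.ofFinite V
  choose! g T hT hgT hg using fun A (hA : A ∈ P) =>
    A.toFinset.exists_labelling_with_disjoint_sublists k m S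
      (by rw [← Set.ncard_eq_toFinset_card']; exact hPcard A hA) fun v _ => hS v
  choose T₀ hT₀ using fun v => exists_subset_card_eq ((Nat.le_mul_of_pos_right k hm).trans (hS v))
  let T' (v : V) : Finset α := if h : ∃ A ∈ P, v ∈ A then T h.choose v else T₀ v
  have hT' : ∀ A ∈ P, ∀ v ∈ A, T' v = T A v := fun A hA v hv => by
    have h : ∃ A ∈ P, v ∈ A := ⟨A, hA, hv⟩
    simp only [T', dif_pos h, hP.elim_set h.choose_spec.1 hA v h.choose_spec.2 hv]
  refine ⟨{B | ∃ A ∈ P, ∃ j, B = {v ∈ A | g A v = j}}, T', ?_, ?_, fun v => ?_, ?_⟩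
  · rintro _ ⟨A₁, hA₁, j₁, rfl⟩ _ ⟨A₂, hA₂, j₂, rfl⟩ hne
    refine Set.disjoint_left.mpr fun v ⟨hv₁, hg₁⟩ ⟨hv₂, hg₂⟩ => hne ?_
    obtain rfl := hP.elim_set hA₁ hA₂ v hv₁ hv₂
    rw [← hg₁, ← hg₂]
  · rintro _ ⟨A, hA, j, rfl⟩
    have := hg A hA j
    rw [← Set.ncard_coe_finset, Finset.coe_filter] at this
    simpa only [Set.mem_toFinset] using this
  · by_cases h : ∃ A ∈ P, v ∈ A
    · rw [hT' _ h.choose_spec.1 v h.choose_spec.2]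
      exact hT _ h.choose_spec.1 v (Set.mem_toFinset.mpr h.choose_spec.2)
    · simpa only [T', dif_neg h] using hT₀ v
  · intro A hA u hu v hv
    by_cases huv : g A u = g A v
    · exact Or.inl ⟨_, ⟨A, hA, g A v, rfl⟩, ⟨hu, huv⟩, ⟨hv, rfl⟩⟩
    · rw [hT' A hA u hu, hT' A hA v hv]
      exact Or.inr (hgT A hA u (Set.mem_toFinset.mpr hu) v (Set.mem_toFinset.mpr hv) huv)

namespace SimpleGraph

lemma addCliques_adj {G : SimpleGraph V} {P : Set (Set V)} {u v : V} :
    (G.addCliques P).Adj u v ↔ G.Adj u v ∨ u ≠ v ∧ ∃ A ∈ P, u ∈ A ∧ v ∈ A := by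
  simp only [addCliques, sup_adj, fromRel_adj]
  constructor
  · rintro (h | ⟨hne, h | ⟨A, hA, hv, hu⟩⟩)
    exacts [Or.inl h, Or.inr ⟨hne, h⟩, Or.inr ⟨hne, A, hA, hu, hv⟩]
  · rintro (h | ⟨hne, h⟩)
    exacts [Or.inl h, Or.inr ⟨hne, Or.inl h⟩]

end SimpleGraph

end

theorem stronglyChoosable_mul {V : Type*} [Fintype V] (G : SimpleGraph V) (k m : ℕ)
    (hm : 0 < m) (h : G.StronglyChoosable k) :
    G.StronglyChoosable (k * m) := by
  intro P hP hPcard S hS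
  obtain ⟨Q, T, hQ, hQcard, hTS, hsep⟩ :=
    exists_refinement_with_disjoint_sublists hP hm hPcard S fun v => (hS v).ge
  obtain ⟨C, hCT, hC, hCadj⟩ := h Q hQ hQcard T fun v => (hTS v).2
  refine ⟨C, fun v => (hCT v).trans (hTS v).1, hC, fun u v huv => ?_⟩
  rcases SimpleGraph.addCliques_adj.mp huv with hG | ⟨hne, A, hA, hu, hv⟩
  · exact hCadj u v (SimpleGraph.addCliques_adj.mpr (Or.inl hG))
  rcases hsep A hA u hu v hv with ⟨B, hB, huB, hvB⟩ | hTuv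
  · exact hCadj u v (SimpleGraph.addCliques_adj.mpr (Or.inr ⟨hne, B, hB, huB, hvB⟩))
  · exact hTuv.mono (hCT u) (hCT v)
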